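/- arXiv:1603.08792 — 5 statements merged into one kernel-verified Lean document; each statement's English description precedes it below -/
import Mathlib

section
/- For the nearest-neighbor PCA with h > 0 small enough and for every δ > 0 there exists β₀ > 0 such that for all β > β₀, Σ_{t=0}^∞ t · P_d(τ_u > t e^{β(Γ_m + δ)}) ≤ 1/3, where the chain is started at the all-minus configuration d and τ_u is the first hitting time of the all-plus configuration u. -/
open scoped BigOperators Classical
open Filter Topology

noncomputable section

/-! ### The nearest-neighbour reversible PCA -/

/-- Spin value (`±1`) of a Boolean spin variable. -/
def spinVal (b : Bool) : ℝ := if b then 1 else -1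

/-- The two-dimensional torus `Λ = (ℤ/Lℤ)²`. -/
abbrev Torus (L : ℕ) := ZMod L × ZMod L

/-- Configuration space `S = {-1,+1}^Λ`, encoded with Booleans. -/
abbrev Cfg (L : ℕ) := Torus L → Bool

/-- Nearest-neighbour kernel: `K(x-y) = 1` iff `|x-y| = 1` on the torus. -/
def nnK (L : ℕ) [NeZero L] (x y : Torus L) : ℝ :=
  if y = (x.1 + 1, x.2) ∨ y = (x.1 - 1, x.2) ∨ y = (x.1, x.2 + 1) ∨ y = (x.1, x.2 - 1)
  then 1 else 0

/-- Local field `S_σ(x) = Σ_y K(x-y) σ(y)`. -/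
def locField (L : ℕ) [NeZero L] (σ : Cfg L) (x : Torus L) : ℝ :=
  ∑ y : Torus L, nnK L x y * spinVal (σ y)

/-- Single-site updating probability `p_{x,σ}(s) = 1/(1+exp(-2βs(S_σ(x)+h)))`. -/
def flipProb (L : ℕ) [NeZero L] (β h : ℝ) (σ : Cfg L) (x : Torus L) (s : ℝ) : ℝ :=
  1 / (1 + Real.exp (-2 * β * s * (locField L σ x + h)))

/-- PCA transition matrix `p(σ,η) = Π_x p_{x,σ}(η(x))`. -/
def pca (L : ℕ) [NeZero L] (β h : ℝ) (σ η : Cfg L) : ℝ :=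
  ∏ x : Torus L, flipProb L β h σ x (spinVal (η x))

/-- The Hamiltonian `H(σ) = -h Σ_x σ(x) - (1/β) Σ_x log cosh (β (S_σ(x)+h))`. -/
def hamPCA (L : ℕ) [NeZero L] (β h : ℝ) (σ : Cfg L) : ℝ :=
  -h * ∑ x : Torus L, spinVal (σ x)
    - (1 / β) * ∑ x : Torus L, Real.log (Real.cosh (β * (locField L σ x + h)))

/-- The (zero-temperature) energy `E(σ) = -h Σ_x σ(x) - Σ_x |S_σ(x)+h|`. -/
def energyPCA (L : ℕ) [NeZero L] (h : ℝ) (σ : Cfg L) : ℝ :=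
  -h * ∑ x : Torus L, spinVal (σ x) - ∑ x : Torus L, |locField L σ x + h|

/-- The all-minus configuration `d`. -/
def dCfg (L : ℕ) : Cfg L := fun _ => false

/-- The all-plus configuration `u`. -/
def uCfg (L : ℕ) : Cfg L := fun _ => true

/-- The even checkerboard `c^e(x) = (-1)^{x₁+x₂}`. -/
def ceCfg (L : ℕ) : Cfg L := fun x => decide (Even (x.1.val + x.2.val))

/-- The odd checkerboard `c^o = -c^e`. -/
def coCfg (L : ℕ) : Cfg L := fun x => !(ceCfg L x)

/-- The critical length `λ = ⌊2/h⌋ + 1`. -/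
def critLen (h : ℝ) : ℕ := ⌊2 / h⌋₊ + 1

/-- The activation energy `Γ_m = -2hλ² + 2(4+h)λ - 2h`. -/
def Gammam (h : ℝ) : ℝ :=
  -2 * h * (critLen h : ℝ) ^ 2 + 2 * (4 + h) * (critLen h : ℝ) - 2 * h

/-- The Gibbs measure `μ(σ) = e^{-βH(σ)}/Z`. -/
def gibbsPCA (L : ℕ) [NeZero L] (β h : ℝ) (σ : Cfg L) : ℝ :=
  Real.exp (-(β * hamPCA L β h σ)) / ∑ η : Cfg L, Real.exp (-(β * hamPCA L β h η))

/-! ### Generic finite-state Markov chain notions -/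

variable {X : Type*} [Fintype X]

/-- `hitIn p A B n x` is the probability that the chain with transition matrix `p`
started at `x` makes its first visit to `A ∪ B` at time `n` and lands in `A`,
i.e. `P_x(τ_{A∪B} = n, X_n ∈ A)`. -/
def hitIn (p : X → X → ℝ) (A B : Set X) : ℕ → X → ℝ
  | 0, _ => 0
  | n + 1, x =>
      ∑ y : X, p x y *
        (if y ∈ A then (if n = 0 then (1 : ℝ) else 0)
          else if y ∈ B then 0 else hitIn p A B n y)

/-- `P_x(τ_A < τ_B)`: the chain hits `A` strictly before `B`. -/
def probHitBefore (p : X → X → ℝ) (A B : Set X) (x : X) : ℝ :=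
  ∑' n : ℕ, hitIn p A B n x

/-- The mean hitting time `E_x[τ_A]`. -/
def expHit (p : X → X → ℝ) (A : Set X) (x : X) : ℝ :=
  ∑' n : ℕ, (n : ℝ) * hitIn p A ∅ n x

/-- The restricted mean hitting time `E_x[τ_A 1_{τ_A < τ_B}]`. -/
def expHitBefore (p : X → X → ℝ) (A B : Set X) (x : X) : ℝ :=
  ∑' n : ℕ, (n : ℝ) * hitIn p A B n x

/-- The tail probability `P_x(τ_A > r)` for a real threshold `r`. -/
def tailProb (p : X → X → ℝ) (A : Set X) (x : X) (r : ℝ) : ℝ :=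
  1 - ∑' n : ℕ, if (n : ℝ) ≤ r then hitIn p A ∅ n x else 0

/-- `p` is a stochastic (Markov transition) matrix. -/
def IsStochasticMat (p : X → X → ℝ) : Prop :=
  (∀ x y, 0 ≤ p x y) ∧ ∀ x, ∑ y : X, p x y = 1

/-- `n`-step transition probabilities. -/
def stepProb (p : X → X → ℝ) : ℕ → X → X → ℝ
  | 0, x, y => if x = y then (1 : ℝ) else 0
  | n + 1, x, y => ∑ z : X, p x z * stepProb p n z y

/-- Irreducibility of the chain. -/
def IsIrreducibleMat (p : X → X → ℝ) : Prop :=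
  ∀ x y, ∃ n, 0 < n ∧ 0 < stepProb p n x y

/-- Aperiodicity: for every state the set of return times has no common divisor `> 1`. -/
def IsAperiodicMat (p : X → X → ℝ) : Prop :=
  ∀ x : X, ∀ d : ℕ, (∀ n : ℕ, 0 < n → 0 < stepProb p n x x → d ∣ n) → d = 1

/-- Reversibility (detailed balance) of `p` with respect to `μ`. -/
def IsReversibleWrt (μ : X → ℝ) (p : X → X → ℝ) : Prop :=
  ∀ x y, μ x * p x y = μ y * p y x

/-- The Dirichlet form `E(f) = (1/2) Σ_{x,y} μ(x) p(x,y) (f(x)-f(y))²`. -/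
def dirichletForm (μ : X → ℝ) (p : X → X → ℝ) (f : X → ℝ) : ℝ :=
  (1 / 2) * ∑ x : X, ∑ y : X, μ x * p x y * (f x - f y) ^ 2

/-- The capacity `cap_β(A,B) = inf {E(f) : f : X → [0,1], f = 1 on A, f = 0 on B}`. -/
def capacityOf (μ : X → ℝ) (p : X → X → ℝ) (A B : Set X) : ℝ :=
  sInf {e | ∃ f : X → ℝ,
    (∀ x, f x ∈ Set.Icc (0 : ℝ) 1) ∧ (∀ x ∈ A, f x = 1) ∧ (∀ x ∈ B, f x = 0) ∧
    e = dirichletForm μ p f}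

/-- The equilibrium potential of the pair `(A,B)`: `f*(η) = P_η(τ_A < τ_B)`
for `η ∉ A ∪ B`, `f* = 1` on `A` and `f* = 0` on `B`. -/
def eqPotential (p : X → X → ℝ) (A B : Set X) : X → ℝ :=
  fun x => if x ∈ A then 1 else if x ∈ B then 0 else probHitBefore p A B x

/-! ### Zero-temperature energy landscape of the PCA -/

/-- Energy cost `Δ(σ,η) = Σ_{x : η(x)(S_σ(x)+h) < 0} 2|S_σ(x)+h|`. -/
def deltaCost (L : ℕ) [NeZero L] (h : ℝ) (σ η : Cfg L) : ℝ :=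
  ∑ x : Torus L,
    if spinVal (η x) * (locField L σ x + h) < 0 then 2 * |locField L σ x + h| else 0

/-- Zero-temperature communication height `E(σ,η) = E(σ) + Δ(σ,η)`. -/
def commEnergy (L : ℕ) [NeZero L] (h : ℝ) (σ η : Cfg L) : ℝ :=
  energyPCA L h σ + deltaCost L h σ η

/-- Height `Φ_ω` along a path `ω` (zero-temperature sense). -/
def pathHeightE (L : ℕ) [NeZero L] (h : ℝ) : List (Cfg L) → ℝ
  | [] => 0
  | [σ] => energyPCA L h σ
  | σ :: η :: rest => max (commEnergy L h σ η) (pathHeightE L h (η :: rest))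

/-- Minimax (communication height) `Φ(σ,A)` between `σ` and the set `A`. -/
def PhiE (L : ℕ) [NeZero L] (h : ℝ) (σ : Cfg L) (A : Set (Cfg L)) : ℝ :=
  sInf {c | ∃ ω : List (Cfg L),
    ω.head? = some σ ∧ (∃ η ∈ A, ω.getLast? = some η) ∧ c = pathHeightE L h ω}

/-- Stability level `V_σ = Φ(σ, I_σ) - E(σ)` where `I_σ = {η : E(η) < E(σ)}`. -/
def stabLevel (L : ℕ) [NeZero L] (h : ℝ) (σ : Cfg L) : ℝ :=
  PhiE L h σ {η | energyPCA L h η < energyPCA L h σ} - energyPCA L h σ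

/-- The set `X^s` of global minima of the energy. -/
def XsSet (L : ℕ) [NeZero L] (h : ℝ) : Set (Cfg L) :=
  {σ | ∀ η, energyPCA L h σ ≤ energyPCA L h η}

/-- The communication energy `Γ = max_{σ ∉ X^s} V_σ`. -/
def commGamma (L : ℕ) [NeZero L] (h : ℝ) : ℝ :=
  sSup {v | ∃ σ : Cfg L, σ ∉ XsSet L h ∧ v = stabLevel L h σ}

/-- The set of metastable states `X^m = {η : V_η = Γ}`. -/
def XmSet (L : ℕ) [NeZero L] (h : ℝ) : Set (Cfg L) :=
  {σ | stabLevel L h σ = commGamma L h}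


/-! ### Auxiliary lemmas -/

section Generic

variable {X : Type*} [Fintype X]

lemma hitIn_zero' (p : X → X → ℝ) (A B : Set X) (x : X) : hitIn p A B 0 x = 0 := rfl

lemma Grec (p : X → X → ℝ) (A : Set X) (hrow : ∀ x, ∑ y : X, p x y = 1) (N : ℕ) (x : X) :
    1 - ∑ n ∈ Finset.range (N + 2), hitIn p A ∅ n x
      = ∑ y : X, p x y *
          (if y ∈ A then 0 else 1 - ∑ n ∈ Finset.range (N + 1), hitIn p A ∅ n y) := by
  have h2 : ∀ n (x : X), hitIn p A ∅ (n + 1) x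
      = ∑ y : X, p x y * (if y ∈ A then (if n = 0 then (1 : ℝ) else 0)
          else hitIn p A ∅ n y) := by
    intro n x
    simp only [hitIn]
    simp
  have h1 : ∑ n ∈ Finset.range (N + 2), hitIn p A ∅ n x
      = ∑ y : X, p x y * (if y ∈ A then 1 else ∑ n ∈ Finset.range (N + 1), hitIn p A ∅ n y) := by
    rw [Finset.sum_range_succ' (fun n => hitIn p A ∅ n x) (N + 1)]
    rw [hitIn_zero', add_zero]
    calc ∑ n ∈ Finset.range (N + 1), hitIn p A ∅ (n + 1) x
        = ∑ n ∈ Finset.range (N + 1), ∑ y : X, p x y *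
            (if y ∈ A then (if n = 0 then (1 : ℝ) else 0) else hitIn p A ∅ n y) :=
          Finset.sum_congr rfl fun n _ => h2 n x
      _ = ∑ y : X, ∑ n ∈ Finset.range (N + 1), p x y *
            (if y ∈ A then (if n = 0 then (1 : ℝ) else 0) else hitIn p A ∅ n y) :=
          Finset.sum_comm
      _ = ∑ y : X, p x y * (if y ∈ A then 1 else ∑ n ∈ Finset.range (N + 1), hitIn p A ∅ n y) := by
          refine Finset.sum_congr rfl fun y _ => ?_
          rw [← Finset.mul_sum]
          congr 1
          by_cases hy : y ∈ A
          · simp [hy]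
          · simp [hy]
  rw [h1]
  rw [show (1 : ℝ) - ∑ y : X, p x y * (if y ∈ A then 1 else ∑ n ∈ Finset.range (N + 1), hitIn p A ∅ n y)
      = ∑ y : X, (p x y * 1 - p x y * (if y ∈ A then 1 else ∑ n ∈ Finset.range (N + 1), hitIn p A ∅ n y)) from by
    rw [Finset.sum_sub_distrib]
    simp [hrow x]]
  refine Finset.sum_congr rfl fun y _ => ?_
  by_cases hy : y ∈ A <;> simp [hy] <;> ring

lemma G_nonneg (p : X → X → ℝ) (A : Set X) (hp : ∀ x y, 0 ≤ p x y)
    (hrow : ∀ x, ∑ y : X, p x y = 1) :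
    ∀ (N : ℕ) (x : X), 0 ≤ 1 - ∑ n ∈ Finset.range (N + 1), hitIn p A ∅ n x := by
  intro N
  induction N with
  | zero => intro x; simp [hitIn_zero']
  | succ N ih =>
      intro x
      rw [show N + 1 + 1 = N + 2 from rfl, Grec p A hrow N x]
      refine Finset.sum_nonneg fun y _ => mul_nonneg (hp x y) ?_
      by_cases hy : y ∈ A
      · simp [hy]
      · simpa [hy] using ih y

lemma G_le (p : X → X → ℝ) (A : Set X) (hp : ∀ x y, 0 ≤ p x y)
    (hrow : ∀ x, ∑ y : X, p x y = 1) (ρ : ℝ) (hρ0 : 0 ≤ ρ) (hρ1 : ρ ≤ 1)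
    (hρle : ∀ x, ρ ≤ ∑ y : X, A.indicator (p x) y) :
    ∀ (N : ℕ) (x : X),
      1 - ∑ n ∈ Finset.range (N + 1), hitIn p A ∅ n x ≤ (1 - ρ) ^ N := by
  intro N
  induction N with
  | zero => intro x; simp [hitIn_zero']
  | succ N ih =>
      intro x
      rw [show N + 1 + 1 = N + 2 from rfl, Grec p A hrow N x]
      have hpow : (0 : ℝ) ≤ (1 - ρ) ^ N := pow_nonneg (by linarith) N
      calc ∑ y : X, p x y *
            (if y ∈ A then 0 else 1 - ∑ n ∈ Finset.range (N + 1), hitIn p A ∅ n y)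
          ≤ ∑ y : X, p x y * (if y ∈ A then 0 else (1 - ρ) ^ N) := by
            refine Finset.sum_le_sum fun y _ => mul_le_mul_of_nonneg_left ?_ (hp x y)
            by_cases hy : y ∈ A
            · simp [hy]
            · simpa [hy] using ih y
        _ = ∑ y : X, (p x y - (if y ∈ A then p x y else 0)) * (1 - ρ) ^ N := by
            refine Finset.sum_congr rfl fun y _ => ?_
            by_cases hy : y ∈ A <;> simp [hy]
        _ = (1 - ∑ y : X, if y ∈ A then p x y else 0) * (1 - ρ) ^ N := by
            rw [← Finset.sum_mul, Finset.sum_sub_distrib, hrow x]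
        _ ≤ (1 - ρ) * (1 - ρ) ^ N := by
            refine mul_le_mul_of_nonneg_right ?_ hpow
            have hind : ∑ y : X, A.indicator (p x) y = ∑ y : X, if y ∈ A then p x y else 0 :=
              Finset.sum_congr rfl fun y _ => Set.indicator_apply A (p x) y
            have := hρle x
            rw [hind] at this
            linarith
        _ = (1 - ρ) ^ (N + 1) := by rw [pow_succ]; ring

lemma tailProb_eq_G (p : X → X → ℝ) (A : Set X) (x : X) (r : ℝ) (hr : 0 ≤ r) :
    tailProb p A x r = 1 - ∑ n ∈ Finset.range (⌊r⌋₊ + 1), hitIn p A ∅ n x := by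
  unfold tailProb
  congr 1
  rw [tsum_eq_sum (s := Finset.range (⌊r⌋₊ + 1))
    (by
      intro n hn
      rw [if_neg]
      have h1 : ⌊r⌋₊ < n := by
        by_contra hc
        exact hn (Finset.mem_range.2 (Nat.lt_succ_of_le (not_lt.1 hc)))
      exact not_le.2 (Nat.lt_of_floor_lt h1))]
  refine Finset.sum_congr rfl fun n hn => ?_
  rw [if_pos]
  have h1 : n ≤ ⌊r⌋₊ := Nat.lt_succ_iff.1 (Finset.mem_range.1 hn)
  calc (n : ℝ) ≤ (⌊r⌋₊ : ℝ) := Nat.cast_le.2 h1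
    _ ≤ r := Nat.floor_le hr

end Generic

/-! ### PCA-specific lemmas -/

lemma flip_add (a : ℝ) :
    1 / (1 + Real.exp (-a)) + 1 / (1 + Real.exp a) = 1 := by
  have h1 : Real.exp (-a) = (Real.exp a)⁻¹ := Real.exp_neg a
  have h2 : 0 < Real.exp a := Real.exp_pos a
  have h3 : (0:ℝ) < 1 + Real.exp a := by positivity
  rw [h1]
  field_simp
  ring

lemma flipProb_nonneg (L : ℕ) [NeZero L] (β h : ℝ) (σ : Cfg L) (x : Torus L) (s : ℝ) :
    0 ≤ flipProb L β h σ x s := by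
  unfold flipProb
  positivity

lemma pca_nonneg (L : ℕ) [NeZero L] (β h : ℝ) (σ η : Cfg L) : 0 ≤ pca L β h σ η :=
  Finset.prod_nonneg fun x _ => flipProb_nonneg L β h σ x _

lemma pca_row (L : ℕ) [NeZero L] (β h : ℝ) (σ : Cfg L) :
    ∑ η : Cfg L, pca L β h σ η = 1 := by
  have key : ∀ x : Torus L, ∑ b : Bool, flipProb L β h σ x (spinVal b) = 1 := by
    intro x
    rw [Fintype.sum_bool]
    unfold flipProb
    rw [show spinVal true = (1 : ℝ) from rfl, show spinVal false = (-1 : ℝ) from rfl]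
    rw [show -2 * β * (1 : ℝ) * (locField L σ x + h) = -(2 * β * (locField L σ x + h)) by ring,
        show -2 * β * (-1 : ℝ) * (locField L σ x + h) = 2 * β * (locField L σ x + h) by ring]
    exact flip_add _
  have h4 := Finset.prod_univ_sum (fun _ : Torus L => (Finset.univ : Finset Bool))
    (fun x b => flipProb L β h σ x (spinVal b))
  rw [Fintype.piFinset_univ] at h4
  calc ∑ η : Cfg L, pca L β h σ η
      = ∑ η : Cfg L, ∏ x : Torus L, flipProb L β h σ x (spinVal (η x)) :=
        Finset.sum_congr rfl fun η _ => rfl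
    _ = ∏ x : Torus L, ∑ b : Bool, flipProb L β h σ x (spinVal b) := h4.symm
    _ = 1 := Finset.prod_eq_one fun x _ => key x

lemma locField_ge (L : ℕ) [NeZero L] (σ : Cfg L) (x : Torus L) :
    -4 ≤ locField L σ x := by
  unfold locField
  have hterm : ∀ y : Torus L, -(nnK L x y) ≤ nnK L x y * spinVal (σ y) := by
    intro y
    unfold nnK
    split_ifs
    · cases hσ : σ y <;> simp [spinVal]
    · simp
  have hsum : ∑ y : Torus L, nnK L x y ≤ 4 := by
    have hnn : ∀ (c : Prop) [Decidable c], (0:ℝ) ≤ if c then 1 else 0 := by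
      intro c _; split_ifs <;> norm_num
    have hle : ∀ y : Torus L, nnK L x y ≤
        (if y = (x.1 + 1, x.2) then (1:ℝ) else 0) + (if y = (x.1 - 1, x.2) then 1 else 0)
        + (if y = (x.1, x.2 + 1) then 1 else 0) + (if y = (x.1, x.2 - 1) then 1 else 0) := by
      intro y
      have e1 := hnn (y = (x.1 + 1, x.2))
      have e2 := hnn (y = (x.1 - 1, x.2))
      have e3 := hnn (y = (x.1, x.2 + 1))
      have e4 := hnn (y = (x.1, x.2 - 1))
      unfold nnK
      by_cases h1 : (y = (x.1 + 1, x.2) ∨ y = (x.1 - 1, x.2) ∨ y = (x.1, x.2 + 1)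
          ∨ y = (x.1, x.2 - 1))
      · rw [if_pos h1]
        rcases h1 with h | h | h | h
        · rw [if_pos h]; linarith
        · rw [if_pos h]; linarith
        · rw [if_pos h]; linarith
        · rw [if_pos h]; linarith
      · rw [if_neg h1]; linarith
    calc ∑ y : Torus L, nnK L x y
        ≤ ∑ y : Torus L,
          ((if y = (x.1 + 1, x.2) then (1:ℝ) else 0) + (if y = (x.1 - 1, x.2) then 1 else 0)
          + (if y = (x.1, x.2 + 1) then 1 else 0) + (if y = (x.1, x.2 - 1) then 1 else 0)) :=
          Finset.sum_le_sum fun y _ => hle y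
      _ ≤ 4 := by
          rw [Finset.sum_add_distrib, Finset.sum_add_distrib, Finset.sum_add_distrib]
          simp only [Finset.sum_ite_eq', Finset.mem_univ, if_true]
          norm_num
  calc (-4 : ℝ) ≤ -∑ y : Torus L, nnK L x y := by linarith
    _ = ∑ y : Torus L, -(nnK L x y) := by rw [Finset.sum_neg_distrib]
    _ ≤ ∑ y : Torus L, nnK L x y * spinVal (σ y) := Finset.sum_le_sum fun y _ => hterm y

lemma flipProb_one_ge (L : ℕ) [NeZero L] (β h : ℝ) (hβ : 0 ≤ β) (hh : 0 ≤ h)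
    (σ : Cfg L) (x : Torus L) :
    (1 + Real.exp (2 * β * (4 + h)))⁻¹ ≤ flipProb L β h σ x 1 := by
  unfold flipProb
  rw [one_div]
  have hS := locField_ge L σ x
  have hexp : Real.exp (-2 * β * 1 * (locField L σ x + h)) ≤ Real.exp (2 * β * (4 + h)) := by
    apply Real.exp_le_exp.2
    nlinarith
  have hpos : (0:ℝ) < 1 + Real.exp (-2 * β * 1 * (locField L σ x + h)) := by positivity
  exact inv_anti₀ hpos (by linarith)

lemma card_torus (L : ℕ) [NeZero L] : Fintype.card (Torus L) = L * L := by
  simp [ZMod.card]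

lemma pca_u_ge (L : ℕ) [NeZero L] (β h : ℝ) (hβ : 0 ≤ β) (hh : 0 ≤ h) (σ : Cfg L) :
    ((1 + Real.exp (2 * β * (4 + h)))⁻¹) ^ (L * L) ≤ pca L β h σ (uCfg L) := by
  unfold pca
  have hb0 : (0:ℝ) ≤ (1 + Real.exp (2 * β * (4 + h)))⁻¹ := by positivity
  calc ((1 + Real.exp (2 * β * (4 + h)))⁻¹) ^ (L * L)
      = ∏ _x : Torus L, (1 + Real.exp (2 * β * (4 + h)))⁻¹ := by
        rw [Finset.prod_const, Finset.card_univ, card_torus]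
    _ ≤ ∏ x : Torus L, flipProb L β h σ x (spinVal (uCfg L x)) := by
        refine Finset.prod_le_prod (fun x _ => hb0) fun x _ => ?_
        rw [show spinVal (uCfg L x) = (1:ℝ) from rfl]
        exact flipProb_one_ge L β h hβ hh σ x

lemma gammam_ge (h : ℝ) (hh : 0 < h) (hh1 : h ≤ 1) : 8 / h ≤ Gammam h := by
  unfold Gammam critLen
  set a : ℝ := ((⌊2 / h⌋₊ + 1 : ℕ) : ℝ) with ha
  have h2h : (0:ℝ) ≤ 2 / h := by positivity
  have ha1 : 2 / h < a := by
    rw [ha]; push_cast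
    exact Nat.lt_floor_add_one (2 / h)
  have ha2 : a ≤ 2 / h + 1 := by
    rw [ha]; push_cast
    have := Nat.floor_le h2h
    linarith
  have hb1 : 2 < h * a := by
    have := (div_lt_iff₀ hh).1 ha1
    linarith [this]
  have hb2 : h * a ≤ 2 + h := by
    have h2 : h * (2 / h) = 2 := by field_simp
    nlinarith
  rw [div_le_iff₀ hh]
  nlinarith [mul_nonneg (le_of_lt (by linarith : (0:ℝ) < h * a - 2)) (by linarith : (0:ℝ) ≤ 2 + h - h * a),
    mul_nonneg hh.le (by linarith : (0:ℝ) ≤ 2 - h)]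

set_option maxHeartbeats 1600000 in
/-- For `h > 0` small enough and every `δ > 0` there is `β₀ > 0` such that
`Σ_{t≥0} t P_d(τ_u > t e^{β(Γ_m+δ)}) ≤ 1/3` for all `β > β₀`. -/
theorem tail_estimate (L : ℕ) [NeZero L] (hL : Even L) :
    ∃ h₀ : ℝ, 0 < h₀ ∧ ∀ h : ℝ, 0 < h → h < h₀ →
      ∀ δ : ℝ, 0 < δ →
        ∃ β₀ : ℝ, 0 < β₀ ∧ ∀ β : ℝ, β₀ < β →
          (∑' t : ℕ, (t : ℝ) *
            tailProb (pca L β h) {uCfg L} (dCfg L)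
              ((t : ℝ) * Real.exp (β * (Gammam h + δ)))) ≤ 1 / 3 := by
  have hLsq : (0:ℝ) ≤ (L:ℝ)^2 := sq_nonneg _
  refine ⟨1 / (2 * (L:ℝ)^2 + 2), by positivity, ?_⟩
  intro h hh hhlt δ hδ
  have hh1 : h ≤ 1 := by
    have h1 : 1 / (2*(L:ℝ)^2+2) ≤ 1/2 :=
      one_div_le_one_div_of_le (by norm_num) (by linarith)
    linarith
  have hΓ : 8 / h ≤ Gammam h := gammam_ge h hh hh1
  have h8h : 16 * (L:ℝ)^2 + 16 < 8 / h := by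
    have h1 : h * (2*(L:ℝ)^2+2) < 1 := by
      rw [show (1:ℝ) = (1 / (2*(L:ℝ)^2+2)) * (2*(L:ℝ)^2+2) by field_simp]
      exact mul_lt_mul_of_pos_right hhlt (by positivity)
    rw [lt_div_iff₀ hh]
    nlinarith
  have hΓ0 : 0 < Gammam h := by
    have : (0:ℝ) < 8 / h := by positivity
    linarith
  set N := L * L with hN
  have hNcast : ((N : ℕ) : ℝ) = (L:ℝ)^2 := by rw [hN]; push_cast; ring
  have hlog2 : 0 < Real.log 2 := Real.log_pos (by norm_num)
  have hlog4 : 0 < Real.log 4 := Real.log_pos (by norm_num)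
  have hNlog : (0:ℝ) ≤ (N:ℝ) * Real.log 2 := mul_nonneg (Nat.cast_nonneg _) hlog2.le
  refine ⟨(N:ℝ) * Real.log 2 + Real.log 4 + 1, by linarith, ?_⟩
  intro β hβ
  have hβ0 : 0 < β := by linarith
  set A : Set (Cfg L) := {uCfg L} with hA
  set T : ℝ := Real.exp (β * (Gammam h + δ)) with hT
  set E : ℝ := Real.exp (2 * β * (4 + h)) with hE
  set base : ℝ := (1 + E)⁻¹ with hbase
  set ρ : ℝ := base ^ N with hρ
  have hE1 : 1 ≤ E := Real.one_le_exp (by positivity)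
  have hbase0 : 0 < base := by rw [hbase]; positivity
  have hbase1 : base ≤ 1 := by
    rw [hbase]
    apply inv_le_one_of_one_le₀
    linarith
  have hρ0 : 0 < ρ := pow_pos hbase0 N
  have hρ1 : ρ ≤ 1 := pow_le_one₀ hbase0.le hbase1
  have hT0 : 0 < T := Real.exp_pos _
  have hp : ∀ x y : Cfg L, 0 ≤ pca L β h x y := fun x y => pca_nonneg L β h x y
  have hrow : ∀ x : Cfg L, ∑ y : Cfg L, pca L β h x y = 1 := fun x => pca_row L β h x
  have hρle : ∀ x : Cfg L, ρ ≤ ∑ y : Cfg L, A.indicator (pca L β h x) y := by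
    intro x
    have h1 : ∑ y : Cfg L, A.indicator (pca L β h x) y = pca L β h x (uCfg L) := by
      simp only [hA, Set.indicator_apply, Set.mem_singleton_iff]
      rw [Finset.sum_ite_eq' Finset.univ (uCfg L) (pca L β h x)]
      simp
    rw [h1, hρ, hbase, hE]
    exact pca_u_ge L β h hβ0.le hh.le x
  -- lower bound on ρ * T
  have hρT : 4 ≤ ρ * T := by
    have hb2 : (2 * E)⁻¹ ≤ base := by
      rw [hbase]
      apply inv_anti₀ (by positivity)
      linarith
    have hρlow : ((2 * E)⁻¹) ^ N ≤ ρ := by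
      rw [hρ]
      exact pow_le_pow_left₀ (by positivity) hb2 N
    have e1 : ((2 * E)⁻¹) ^ N
        = ((2:ℝ)^N)⁻¹ * (Real.exp ((N:ℝ) * (2 * β * (4 + h))))⁻¹ := by
      rw [inv_pow, mul_pow, hE, ← Real.exp_nat_mul, mul_inv]
    have e2 : (Real.exp ((N:ℝ) * (2 * β * (4 + h))))⁻¹ * T
        = Real.exp (β * (Gammam h + δ) - (N:ℝ) * (2 * β * (4 + h))) := by
      rw [hT, Real.exp_sub, div_eq_mul_inv]
      ring
    have hκ : 1 ≤ Gammam h + δ - (N:ℝ) * (2 * (4 + h)) := by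
      rw [hNcast]
      have hhL : h * (L:ℝ)^2 ≤ (L:ℝ)^2 := by nlinarith
      nlinarith
    have harg : β ≤ β * (Gammam h + δ) - (N:ℝ) * (2 * β * (4 + h)) := by
      have expand : β * (Gammam h + δ) - (N:ℝ) * (2 * β * (4 + h))
          = β * (Gammam h + δ - (N:ℝ) * (2 * (4 + h))) := by ring
      rw [expand]
      nlinarith
    have e3 : Real.exp ((N:ℝ) * Real.log 2 + Real.log 4) = 2^N * 4 := by
      rw [Real.exp_add, Real.exp_nat_mul, Real.exp_log (by norm_num : (0:ℝ) < 2),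
        Real.exp_log (by norm_num : (0:ℝ) < 4)]
    have h2N : (0:ℝ) < 2^N := by positivity
    have hexp : (2:ℝ)^N * 4 ≤ Real.exp (β * (Gammam h + δ) - (N:ℝ) * (2 * β * (4 + h))) := by
      rw [← e3]
      exact Real.exp_le_exp.2 (by linarith)
    calc (4:ℝ) = ((2:ℝ)^N)⁻¹ * ((2:ℝ)^N * 4) := by field_simp
      _ ≤ ((2:ℝ)^N)⁻¹ * Real.exp (β * (Gammam h + δ) - (N:ℝ) * (2 * β * (4 + h))) :=
          mul_le_mul_of_nonneg_left hexp (by positivity)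
      _ = ((2 * E)⁻¹) ^ N * T := by
          rw [e1, mul_assoc (((2:ℝ)^N)⁻¹) ((Real.exp ((N:ℝ) * (2 * β * (4 + h))))⁻¹) T, e2]
      _ ≤ ρ * T := mul_le_mul_of_nonneg_right hρlow hT0.le
  set M := ⌊T⌋₊ with hM
  set q := (1 - ρ)^M with hq
  have h1ρ0 : (0:ℝ) ≤ 1 - ρ := by linarith
  have h1ρ1 : 1 - ρ ≤ 1 := by linarith
  have hq0 : 0 ≤ q := pow_nonneg h1ρ0 M
  have hq18 : q ≤ 1/8 := by
    have s3 : T - 1 < (M:ℝ) := by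
      rw [hM]
      exact Nat.sub_one_lt_floor T
    have s4 : (M:ℝ) * (-ρ) ≤ -3 := by
      have s4a : ((M:ℝ) - (T - 1)) * ρ ≥ 0 := mul_nonneg (by linarith) hρ0.le
      nlinarith
    have s6 : Real.exp (-3) ≤ 1/8 := by
      rw [Real.exp_neg, show (1:ℝ)/8 = 8⁻¹ by norm_num]
      apply inv_anti₀ (by norm_num)
      have e : Real.exp 3 = (Real.exp 1)^(3:ℕ) := by
        rw [← Real.exp_nat_mul]; norm_num
      have h2e : (2:ℝ) ≤ Real.exp 1 := by
        have := Real.add_one_le_exp 1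
        linarith
      rw [e]
      calc (8:ℝ) = 2^(3:ℕ) := by norm_num
        _ ≤ (Real.exp 1)^(3:ℕ) := pow_le_pow_left₀ (by norm_num) h2e 3
    calc q ≤ (Real.exp (-ρ))^M := by
          rw [hq]
          exact pow_le_pow_left₀ h1ρ0 (by linarith [Real.add_one_le_exp (-ρ)]) M
      _ = Real.exp ((M:ℝ) * (-ρ)) := (Real.exp_nat_mul _ M).symm
      _ ≤ Real.exp (-3) := Real.exp_le_exp.2 s4
      _ ≤ 1/8 := s6
  have htail : ∀ t : ℕ,
      0 ≤ (t:ℝ) * tailProb (pca L β h) A (dCfg L) ((t:ℝ) * T) ∧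
      (t:ℝ) * tailProb (pca L β h) A (dCfg L) ((t:ℝ) * T) ≤ (t:ℝ) * q^t := by
    intro t
    have hr0 : (0:ℝ) ≤ (t:ℝ) * T := by positivity
    have e0 : tailProb (pca L β h) A (dCfg L) ((t:ℝ) * T)
        = 1 - ∑ n ∈ Finset.range (⌊(t:ℝ) * T⌋₊ + 1), hitIn (pca L β h) A ∅ n (dCfg L) :=
      tailProb_eq_G _ _ _ _ hr0
    have hge : 0 ≤ tailProb (pca L β h) A (dCfg L) ((t:ℝ) * T) := by
      rw [e0]
      exact G_nonneg (pca L β h) A hp hrow _ _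
    have hle1 : tailProb (pca L β h) A (dCfg L) ((t:ℝ) * T) ≤ (1 - ρ)^(⌊(t:ℝ) * T⌋₊) := by
      rw [e0]
      exact G_le (pca L β h) A hp hrow ρ hρ0.le hρ1 hρle _ _
    have hfloor : t * M ≤ ⌊(t:ℝ) * T⌋₊ := by
      apply Nat.le_floor
      push_cast
      exact mul_le_mul_of_nonneg_left ((Nat.floor_le hT0.le : ((⌊T⌋₊:ℕ):ℝ) ≤ T)) (Nat.cast_nonneg t)
    have hle2 : (1 - ρ)^(⌊(t:ℝ) * T⌋₊) ≤ q^t := by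
      rw [hq, ← pow_mul]
      exact pow_le_pow_of_le_one h1ρ0 h1ρ1 (by rw [Nat.mul_comm]; exact hfloor)
    exact ⟨mul_nonneg (Nat.cast_nonneg t) hge,
      mul_le_mul_of_nonneg_left (le_trans hle1 hle2) (Nat.cast_nonneg t)⟩
  have hqnorm : ‖q‖ < 1 := by
    rw [Real.norm_eq_abs, abs_of_nonneg hq0]
    linarith
  have hsumg : Summable (fun t : ℕ => (t:ℝ) * q^t) := by
    have := summable_pow_mul_geometric_of_norm_lt_one (R := ℝ) 1 hqnorm
    simpa using this
  have hsumf : Summable (fun t : ℕ => (t:ℝ) * tailProb (pca L β h) A (dCfg L) ((t:ℝ) * T)) :=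
    Summable.of_nonneg_of_le (fun t => (htail t).1) (fun t => (htail t).2) hsumg
  calc (∑' t : ℕ, (t:ℝ) * tailProb (pca L β h) A (dCfg L) ((t:ℝ) * T))
      ≤ ∑' t : ℕ, (t:ℝ) * q^t := Summable.tsum_le_tsum (fun t => (htail t).2) hsumf hsumg
    _ = q / (1 - q)^2 := tsum_coe_mul_geometric_of_norm_lt_one hqnorm
    _ ≤ 1/3 := by
        rw [div_le_iff₀ (by nlinarith : (0:ℝ) < (1 - q)^2)]
        nlinarith

end
end

section
/- The nearest-neighbor PCA transition matrix p satisfies the detailed balance condition p(σ,η) e^{-βH(σ)} = p(η,σ) e^{-βH(η)} for all σ, η ∈ S, where H(σ) = -h Σ_{x∈Λ} σ(x) - (1/β) Σ_{x∈Λ} log cosh(β(S_σ(x)+h)). -/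
open scoped BigOperators Classical
open Filter Topology

noncomputable section

/-! ### Generic finite-state Markov chain notions -/

variable {X : Type*} [Fintype X]

lemma nnK_symm (L : ℕ) [NeZero L] (x y : Torus L) : nnK L x y = nnK L y x := by
  unfold nnK
  refine if_congr ?_ rfl rfl
  constructor <;> rintro (rfl | rfl | rfl | rfl) <;> simp [Prod.ext_iff]

lemma bilin_symm (L : ℕ) [NeZero L] (σ η : Cfg L) :
    ∑ x : Torus L, spinVal (η x) * locField L σ x =
      ∑ x : Torus L, spinVal (σ x) * locField L η x := by
  unfold locField
  simp_rw [Finset.mul_sum]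
  rw [Finset.sum_comm]
  refine Finset.sum_congr rfl fun x _ => Finset.sum_congr rfl fun y _ => ?_
  rw [nnK_symm]; ring

lemma flipProb_formula (L : ℕ) [NeZero L] (β h : ℝ) (σ : Cfg L) (x : Torus L) (b : Bool) :
    flipProb L β h σ x (spinVal b) =
      Real.exp (β * spinVal b * (locField L σ x + h)) /
        (2 * Real.cosh (β * (locField L σ x + h))) := by
  set a := locField L σ x + h with ha
  have ht : (0 : ℝ) < Real.exp (β * a) := Real.exp_pos _
  have hinv : Real.exp (-(β * a)) = (Real.exp (β * a))⁻¹ := Real.exp_neg _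
  cases b
  · simp only [spinVal, Bool.false_eq_true, if_false, flipProb, Real.cosh_eq, ← ha]
    rw [show (-2 : ℝ) * β * (-1) * a = β * a + β * a by ring, Real.exp_add,
      show β * (-1) * a = -(β * a) by ring, hinv]
    field_simp
    ring
  · simp only [spinVal, if_true, if_false, flipProb, Real.cosh_eq, ← ha]
    rw [show (-2 : ℝ) * β * 1 * a = -(β * a) + -(β * a) by ring, Real.exp_add, hinv,
      show β * 1 * a = β * a by ring]
    field_simp

lemma pca_key (L : ℕ) [NeZero L] (β h : ℝ) (hβ : 0 < β) (σ η : Cfg L) :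
    pca L β h σ η * Real.exp (-(β * hamPCA L β h σ)) =
      ((1 : ℝ) / 2) ^ Fintype.card (Torus L) *
        Real.exp (β * h * ((∑ x : Torus L, spinVal (σ x)) + ∑ x : Torus L, spinVal (η x)) +
          β * ∑ x : Torus L, spinVal (η x) * locField L σ x) := by
  have hcosh : ∀ x : Torus L, (0 : ℝ) < Real.cosh (β * (locField L σ x + h)) :=
    fun x => Real.cosh_pos _
  have hexp : Real.exp (-(β * hamPCA L β h σ)) =
      Real.exp (β * h * ∑ x : Torus L, spinVal (σ x)) *
        ∏ x : Torus L, Real.cosh (β * (locField L σ x + h)) := by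
    unfold hamPCA
    rw [show -(β * (-h * (∑ x : Torus L, spinVal (σ x))
          - 1 / β * ∑ x : Torus L, Real.log (Real.cosh (β * (locField L σ x + h)))))
        = β * h * (∑ x : Torus L, spinVal (σ x))
          + ∑ x : Torus L, Real.log (Real.cosh (β * (locField L σ x + h))) by
        field_simp; ring]
    rw [Real.exp_add, Real.exp_sum]
    congr 1
    exact Finset.prod_congr rfl fun x _ => Real.exp_log (hcosh x)
  rw [hexp, pca]
  simp_rw [flipProb_formula]
  rw [show (∏ x : Torus L, Real.exp (β * spinVal (η x) * (locField L σ x + h)) /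
        (2 * Real.cosh (β * (locField L σ x + h)))) *
      (Real.exp (β * h * ∑ x : Torus L, spinVal (σ x)) *
        ∏ x : Torus L, Real.cosh (β * (locField L σ x + h)))
      = Real.exp (β * h * ∑ x : Torus L, spinVal (σ x)) *
        ((∏ x : Torus L, Real.exp (β * spinVal (η x) * (locField L σ x + h)) /
          (2 * Real.cosh (β * (locField L σ x + h)))) *
         ∏ x : Torus L, Real.cosh (β * (locField L σ x + h))) by ring]
  rw [← Finset.prod_mul_distrib]
  have : ∀ x : Torus L,
      Real.exp (β * spinVal (η x) * (locField L σ x + h)) /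
          (2 * Real.cosh (β * (locField L σ x + h))) *
        Real.cosh (β * (locField L σ x + h))
      = (1 / 2) * Real.exp (β * spinVal (η x) * (locField L σ x + h)) := by
    intro x
    field_simp
  simp_rw [this]
  rw [Finset.prod_mul_distrib, Finset.prod_const, ← Real.exp_sum]
  rw [Finset.card_univ, mul_left_comm, ← Real.exp_add]
  congr 1
  rw [show (∑ x : Torus L, β * spinVal (η x) * (locField L σ x + h))
        = (β * ∑ x : Torus L, spinVal (η x) * locField L σ x)
          + β * h * ∑ x : Torus L, spinVal (η x) by
      rw [Finset.mul_sum, Finset.mul_sum, ← Finset.sum_add_distrib]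
      exact Finset.sum_congr rfl fun x _ => by ring]
  ring

/-- Detailed balance: `p(σ,η) e^{-βH(σ)} = p(η,σ) e^{-βH(η)}`. -/
theorem detailed_balance (L : ℕ) [NeZero L] (hL : Even L) (β h : ℝ)
    (hβ : 0 < β) (hh0 : 0 < h) (hh1 : h < 1) :
    ∀ σ η : Cfg L,
      pca L β h σ η * Real.exp (-(β * hamPCA L β h σ)) =
        pca L β h η σ * Real.exp (-(β * hamPCA L β h η)) := by
  intro σ η
  rw [pca_key L β h hβ σ η, pca_key L β h hβ η σ, bilin_symm]
  ring_nf

end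
end

section
/- The Gibbs measure μ(σ) = e^{-βH(σ)}/Z, with Z = Σ_{η∈S} e^{-βH(η)}, is stationary for the nearest-neighbor PCA: Σ_{σ∈S} μ(σ) p(σ,η) = μ(η) for every η ∈ S. -/
open scoped BigOperators Classical
open Filter Topology

noncomputable section

/-! ### Generic finite-state Markov chain notions -/

variable {X : Type*} [Fintype X]

/-! The logistic update rule `p_{x,σ}(s) = e^{βs(S_σ(x)+h)} / (2 cosh(β(S_σ(x)+h)))` turns
`e^{-βH(σ)} p(σ,η)` into `2^{-|Λ|} exp(β(h Σσ + h Ση + Σ_x η(x) S_σ(x)))`: the `cosh` factors of the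
Hamiltonian cancel the normalisations of the update probabilities. The nearest-neighbour kernel is
symmetric, so this expression is symmetric in `σ` and `η`. Hence `μ` is reversible for `p`, and a
reversible measure of a row-stochastic matrix is stationary. -/

theorem IsReversibleWrt.sum_mul_eq {μ : X → ℝ} {p : X → X → ℝ} (hrev : IsReversibleWrt μ p)
    (hrow : ∀ x, ∑ y, p x y = 1) (y : X) :
    ∑ x, μ x * p x y = μ y := by
  simp_rw [hrev _ y, ← Finset.mul_sum, hrow, mul_one]

theorem one_div_one_add_exp_neg_two_mul (t : ℝ) :
    1 / (1 + Real.exp (-2 * t)) = Real.exp t / (2 * Real.cosh t) := by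
  have hexp : Real.exp t * Real.exp (-2 * t) = Real.exp (-t) := by
    rw [← Real.exp_add]; ring_nf
  rw [Real.cosh_eq, div_eq_div_iff (by positivity) (by positivity)]
  linarith

section PCA

variable (L : ℕ) [NeZero L] (β h : ℝ)

theorem flipProb_spinVal (σ : Cfg L) (x : Torus L) (b : Bool) :
    flipProb L β h σ x (spinVal b)
      = Real.exp (β * spinVal b * (locField L σ x + h))
          / (2 * Real.cosh (β * (locField L σ x + h))) := by
  have hcosh : Real.cosh (β * spinVal b * (locField L σ x + h))
      = Real.cosh (β * (locField L σ x + h)) := by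
    cases b <;> simp [spinVal]
  rw [flipProb, ← hcosh, ← one_div_one_add_exp_neg_two_mul]
  ring_nf

theorem sum_flipProb_spinVal (σ : Cfg L) (x : Torus L) :
    ∑ b : Bool, flipProb L β h σ x (spinVal b) = 1 := by
  rw [Fintype.sum_bool, flipProb_spinVal, flipProb_spinVal, ← add_div,
    div_eq_one_iff_eq (by positivity [Real.cosh_pos]), Real.cosh_eq]
  simp only [spinVal, if_true, Bool.false_eq_true, if_false]
  ring_nf

theorem sum_pca (σ : Cfg L) : ∑ η : Cfg L, pca L β h σ η = 1 := by
  simp only [pca]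
  rw [← Fintype.prod_sum (fun x b => flipProb L β h σ x (spinVal b))]
  exact Finset.prod_eq_one fun x _ => sum_flipProb_spinVal L β h σ x

theorem nnK_comm (x y : Torus L) : nnK L x y = nnK L y x := by
  obtain ⟨x₁, x₂⟩ := x
  obtain ⟨y₁, y₂⟩ := y
  simp only [nnK, Prod.mk.injEq]
  congr 1
  grind

theorem sum_spinVal_mul_locField_comm (σ η : Cfg L) :
    ∑ x, spinVal (η x) * locField L σ x = ∑ x, spinVal (σ x) * locField L η x := by
  simp only [locField, Finset.mul_sum]
  rw [Finset.sum_comm]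
  refine Finset.sum_congr rfl fun x _ => Finset.sum_congr rfl fun y _ => ?_
  rw [nnK_comm]
  ring

variable {β}

theorem exp_neg_mul_hamPCA (hβ : β ≠ 0) (σ : Cfg L) :
    Real.exp (-(β * hamPCA L β h σ))
      = Real.exp (β * h * ∑ x, spinVal (σ x))
          * ∏ x, Real.cosh (β * (locField L σ x + h)) := by
  have hexponent : -(β * hamPCA L β h σ)
      = β * h * ∑ x, spinVal (σ x) + ∑ x, Real.log (Real.cosh (β * (locField L σ x + h))) := by
    rw [hamPCA]
    field_simp
    ring
  rw [hexponent, Real.exp_add, Real.exp_sum]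
  simp only [Real.exp_log (Real.cosh_pos _)]

theorem exp_neg_mul_hamPCA_mul_pca (hβ : β ≠ 0) (σ η : Cfg L) :
    Real.exp (-(β * hamPCA L β h σ)) * pca L β h σ η
      = Real.exp (β * (h * ∑ x, spinVal (σ x) + h * ∑ x, spinVal (η x)
          + ∑ x, spinVal (η x) * locField L σ x)) / 2 ^ Fintype.card (Torus L) := by
  have hpca : pca L β h σ η
      = Real.exp (∑ x, β * spinVal (η x) * (locField L σ x + h))
          / (2 ^ Fintype.card (Torus L) * ∏ x, Real.cosh (β * (locField L σ x + h))) := by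
    rw [pca, Real.exp_sum, ← Finset.card_univ, ← Finset.prod_const, ← Finset.prod_mul_distrib,
      ← Finset.prod_div_distrib]
    exact Finset.prod_congr rfl fun x _ => flipProb_spinVal L β h σ x (η x)
  have hexponent : β * h * ∑ x, spinVal (σ x) + ∑ x, β * spinVal (η x) * (locField L σ x + h)
      = β * (h * ∑ x, spinVal (σ x) + h * ∑ x, spinVal (η x)
          + ∑ x, spinVal (η x) * locField L σ x) := by
    simp only [mul_add, Finset.sum_add_distrib, Finset.mul_sum]
    ring_nf
  have hcosh : (0 : ℝ) < ∏ x, Real.cosh (β * (locField L σ x + h)) :=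
    Finset.prod_pos fun x _ => Real.cosh_pos _
  rw [exp_neg_mul_hamPCA L h hβ, hpca, ← hexponent, Real.exp_add]
  field_simp

theorem isReversibleWrt_gibbsPCA (hβ : β ≠ 0) :
    IsReversibleWrt (gibbsPCA L β h) (pca L β h) := by
  intro σ η
  simp only [gibbsPCA, div_mul_eq_mul_div, exp_neg_mul_hamPCA_mul_pca L h hβ,
    sum_spinVal_mul_locField_comm L σ η]
  ring_nf

end PCA

theorem gibbs_stationary_general (L : ℕ) [NeZero L] (β h : ℝ)
    (hβ : 0 < β) :
    ∀ η : Cfg L, ∑ σ : Cfg L, gibbsPCA L β h σ * pca L β h σ η = gibbsPCA L β h η :=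
  (isReversibleWrt_gibbsPCA L h hβ.ne').sum_mul_eq (sum_pca L β h)

/-- Stationarity of the Gibbs measure: `Σ_σ μ(σ) p(σ,η) = μ(η)`. -/
theorem gibbs_stationary (L : ℕ) [NeZero L] (hL : Even L) (β h : ℝ)
    (hβ : 0 < β) (hh0 : 0 < h) (hh1 : h < 1) :
    ∀ η : Cfg L, ∑ σ : Cfg L, gibbsPCA L β h σ * pca L β h σ η = gibbsPCA L β h η :=
  gibbs_stationary_general L β h hβ

end
end

section
/- Let (X_n) be an irreducible aperiodic Markov chain on a finite set X, let A, B ⊂ X be disjoint nonempty sets and η ∉ A ∪ B. Then the renewal identities hold: P_η(τ_A < τ_B) = P_η(τ_A < τ_{B∪{η}}) / P_η(τ_{A∪B} < τ_η) and P_η(τ_B < τ_A) = P_η(τ_B < τ_{A∪{η}}) / P_η(τ_{A∪B} < τ_η). -/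
open scoped BigOperators Classical
open Filter Topology

noncomputable section

/-! ### Generic finite-state Markov chain notions -/

variable {X : Type*} [Fintype X]

set_option linter.unusedSectionVars false
section Renewal
variable {p : X → X → ℝ}

lemma hitIn_nonneg (hp0 : ∀ x y, 0 ≤ p x y) (A B : Set X) :
    ∀ n x, 0 ≤ hitIn p A B n x := by
  intro n
  induction n with
  | zero => intro x; simp [hitIn]
  | succ n ih =>
    intro x
    refine Finset.sum_nonneg fun y _ => mul_nonneg (hp0 x y) ?_
    split_ifs
    all_goals first | exact ih y | norm_num

lemma hitIn_le_union (hp0 : ∀ x y, 0 ≤ p x y) (A B : Set X) :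
    ∀ n x, hitIn p A B n x ≤ hitIn p (A ∪ B) ∅ n x := by
  intro n
  induction n with
  | zero => intro x; simp [hitIn]
  | succ n ih =>
    intro x
    refine Finset.sum_le_sum fun y _ => mul_le_mul_of_nonneg_left ?_ (hp0 x y)
    by_cases hyA : y ∈ A
    · simp [hyA, Set.mem_union, le_refl]
    · by_cases hyB : y ∈ B
      · simp only [if_neg hyA, if_pos hyB, Set.mem_union, hyB, or_true, if_pos]
        split_ifs <;> norm_num
      · have : y ∉ A ∪ B := by simp [hyA, hyB]
        simp only [if_neg hyA, if_neg hyB, if_neg this, Set.mem_empty_iff_false, if_false]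
        exact ih y

def qMat (p : X → X → ℝ) (C : Set X) : X → X → ℝ := fun x y => if y ∈ C then 0 else p x y

def avoidP (p : X → X → ℝ) (C : Set X) (n : ℕ) (x : X) : ℝ :=
  ∑ y : X, stepProb (qMat p C) n x y

lemma qMat_nonneg (hp0 : ∀ x y, 0 ≤ p x y) (C : Set X) (x y : X) : 0 ≤ qMat p C x y := by
  unfold qMat; split_ifs <;> [norm_num; exact hp0 x y]

lemma qMat_le (hp0 : ∀ x y, 0 ≤ p x y) (C : Set X) (x y : X) : qMat p C x y ≤ p x y := by
  unfold qMat; split_ifs <;> [exact hp0 x y; exact le_rfl]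

lemma stepProb_nonneg {q : X → X → ℝ} (hq : ∀ x y, 0 ≤ q x y) :
    ∀ n x y, 0 ≤ stepProb q n x y := by
  intro n
  induction n with
  | zero => intro x y; unfold stepProb; split_ifs <;> norm_num
  | succ n ih =>
    intro x y
    exact Finset.sum_nonneg fun z _ => mul_nonneg (hq x z) (ih z y)

lemma stepProb_sum {q : X → X → ℝ} (hq1 : ∀ x, ∑ y : X, q x y = 1) :
    ∀ n x, ∑ y : X, stepProb q n x y = 1 := by
  intro n
  induction n with
  | zero => intro x; simp [stepProb]
  | succ n ih =>
    intro x
    unfold stepProb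
    rw [Finset.sum_comm]
    calc ∑ z : X, ∑ y : X, q x z * stepProb q n z y
        = ∑ z : X, q x z * ∑ y : X, stepProb q n z y := by
          simp [Finset.mul_sum]
      _ = 1 := by simp [ih, hq1]

lemma stepProb_le_one {q : X → X → ℝ} (hq0 : ∀ x y, 0 ≤ q x y)
    (hq1 : ∀ x, ∑ y : X, q x y = 1) (n : ℕ) (x y : X) : stepProb q n x y ≤ 1 := by
  have := stepProb_sum hq1 n x
  calc stepProb q n x y ≤ ∑ z : X, stepProb q n x z :=
        Finset.single_le_sum (fun z _ => stepProb_nonneg hq0 n x z) (Finset.mem_univ y)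
    _ = 1 := this

lemma stepProb_add (q : X → X → ℝ) :
    ∀ m n x y, stepProb q (m + n) x y = ∑ z : X, stepProb q m x z * stepProb q n z y := by
  intro m
  induction m with
  | zero =>
    intro n x y
    simp [stepProb, ite_mul, Finset.sum_ite_eq, Nat.zero_add]
  | succ m ih =>
    intro n x y
    have h : m + 1 + n = (m + n) + 1 := Nat.succ_add m n
    rw [h]
    rw [show stepProb q (m + n + 1) x y = ∑ z : X, q x z * stepProb q (m + n) z y from rfl]
    calc ∑ z : X, q x z * stepProb q (m + n) z y
        = ∑ z : X, ∑ w : X, q x z * (stepProb q m z w * stepProb q n w y) := by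
          refine Finset.sum_congr rfl fun z _ => ?_
          rw [ih, Finset.mul_sum]
      _ = ∑ w : X, ∑ z : X, q x z * (stepProb q m z w * stepProb q n w y) :=
          Finset.sum_comm
      _ = ∑ w : X, stepProb q (m + 1) x w * stepProb q n w y := by
          refine Finset.sum_congr rfl fun w _ => ?_
          rw [show stepProb q (m + 1) x w = ∑ z : X, q x z * stepProb q m z w from rfl,
            Finset.sum_mul]
          exact Finset.sum_congr rfl fun z _ => by ring

lemma avoidP_zero (p : X → X → ℝ) (C : Set X) (x : X) : avoidP p C 0 x = 1 := by
  simp [avoidP, stepProb]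

lemma avoidP_succ (p : X → X → ℝ) (C : Set X) (n : ℕ) (x : X) :
    avoidP p C (n + 1) x = ∑ z : X, qMat p C x z * avoidP p C n z := by
  unfold avoidP
  simp only [stepProb]
  rw [Finset.sum_comm]
  simp [Finset.mul_sum]

lemma avoidP_nonneg (hp0 : ∀ x y, 0 ≤ p x y) (C : Set X) (n : ℕ) (x : X) :
    0 ≤ avoidP p C n x :=
  Finset.sum_nonneg fun y _ => stepProb_nonneg (qMat_nonneg hp0 C) n x y

lemma avoidP_succ_le (hp0 : ∀ x y, 0 ≤ p x y) (hp1 : ∀ x, ∑ y : X, p x y = 1) (C : Set X) :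
    ∀ n x, avoidP p C (n + 1) x ≤ avoidP p C n x := by
  intro n
  induction n with
  | zero =>
    intro x
    rw [avoidP_succ, avoidP_zero]
    calc ∑ z : X, qMat p C x z * avoidP p C 0 z = ∑ z : X, qMat p C x z := by
          simp [avoidP_zero]
      _ ≤ ∑ z : X, p x z := Finset.sum_le_sum fun z _ => qMat_le hp0 C x z
      _ = 1 := hp1 x
  | succ n ih =>
    intro x
    rw [avoidP_succ, avoidP_succ p C n x]
    exact Finset.sum_le_sum fun z _ =>
      mul_le_mul_of_nonneg_left (ih z) (qMat_nonneg hp0 C x z)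

lemma avoidP_anti (hp0 : ∀ x y, 0 ≤ p x y) (hp1 : ∀ x, ∑ y : X, p x y = 1) (C : Set X)
    (x : X) : Antitone fun n => avoidP p C n x :=
  antitone_nat_of_succ_le fun n => avoidP_succ_le hp0 hp1 C n x

lemma avoidP_add (p : X → X → ℝ) (C : Set X) (m n : ℕ) (x : X) :
    avoidP p C (m + n) x = ∑ z : X, stepProb (qMat p C) m x z * avoidP p C n z := by
  unfold avoidP
  simp_rw [stepProb_add (qMat p C) m n x]
  rw [Finset.sum_comm]
  simp [Finset.mul_sum]

lemma sum_hitIn_range (hp0 : ∀ x y, 0 ≤ p x y) (hp1 : ∀ x, ∑ y : X, p x y = 1) (C : Set X) :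
    ∀ n x, ∑ k ∈ Finset.range (n + 1), hitIn p C ∅ k x = 1 - avoidP p C n x := by
  intro n
  induction n with
  | zero => intro x; simp [hitIn, avoidP_zero]
  | succ n ih =>
    intro x
    rw [Finset.sum_range_succ']
    simp only [hitIn, Set.mem_empty_iff_false, if_false]
    rw [add_zero, Finset.sum_comm]
    calc ∑ y : X, ∑ k ∈ Finset.range (n + 1),
            p x y * (if y ∈ C then (if k = 0 then (1:ℝ) else 0) else hitIn p C ∅ k y)
        = ∑ y : X, (p x y - qMat p C x y * avoidP p C n y) := by
          refine Finset.sum_congr rfl fun y _ => ?_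
          rw [← Finset.mul_sum]
          by_cases hy : y ∈ C
          · simp only [if_pos hy]
            rw [Finset.sum_ite_eq' (Finset.range (n + 1)) 0 (fun _ => (1:ℝ))]
            simp [qMat, hy]
          · simp only [if_neg hy]
            rw [ih y]
            have : qMat p C x y = p x y := by simp [qMat, hy]
            rw [this]
            ring
      _ = 1 - avoidP p C (n + 1) x := by
          rw [Finset.sum_sub_distrib, hp1, avoidP_succ]

lemma stepProb_one (q : X → X → ℝ) (x y : X) : stepProb q 1 x y = q x y := by
  simp [stepProb, mul_ite, Finset.sum_ite_eq']

lemma avoidP_le_sub (hp0 : ∀ x y, 0 ≤ p x y) (hp1 : ∀ x, ∑ y : X, p x y = 1)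
    {C : Set X} {c : X} (hc : c ∈ C) :
    ∀ n x, avoidP p C (n + 1) x ≤ 1 - stepProb p (n + 1) x c := by
  intro n
  induction n with
  | zero =>
    intro x
    rw [avoidP_succ, stepProb_one]
    have h1 : ∑ z : X, qMat p C x z * avoidP p C 0 z = ∑ z : X, qMat p C x z := by
      simp [avoidP_zero]
    rw [h1]
    have h2 : ∀ z : X, qMat p C x z ≤ (if z = c then 0 else p x z) := by
      intro z
      by_cases hz : z = c
      · subst hz; simp [qMat, hc]
      · simp only [if_neg hz]; exact qMat_le hp0 C x z
    calc ∑ z : X, qMat p C x z ≤ ∑ z : X, (if z = c then 0 else p x z) :=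
          Finset.sum_le_sum fun z _ => h2 z
      _ = ∑ z : X, (p x z - if z = c then p x z else 0) := by
          refine Finset.sum_congr rfl fun z _ => ?_
          split_ifs <;> ring
      _ = 1 - p x c := by
          rw [Finset.sum_sub_distrib, hp1, Finset.sum_ite_eq' Finset.univ c (fun z => p x z)]
          simp
  | succ n ih =>
    intro x
    rw [avoidP_succ]
    have hst : ∀ z, stepProb p (n + 1) z c ≤ 1 :=
      fun z => stepProb_le_one hp0 hp1 (n + 1) z c
    calc ∑ z : X, qMat p C x z * avoidP p C (n + 1) z
        ≤ ∑ z : X, qMat p C x z * (1 - stepProb p (n + 1) z c) :=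
          Finset.sum_le_sum fun z _ =>
            mul_le_mul_of_nonneg_left (ih z) (qMat_nonneg hp0 C x z)
      _ ≤ ∑ z : X, p x z * (1 - stepProb p (n + 1) z c) :=
          Finset.sum_le_sum fun z _ =>
            mul_le_mul_of_nonneg_right (qMat_le hp0 C x z) (by linarith [hst z])
      _ = 1 - stepProb p (n + 2) x c := by
          rw [show stepProb p (n + 2) x c
              = ∑ z : X, p x z * stepProb p (n + 1) z c from rfl]
          have hz : ∀ z : X, p x z * (1 - stepProb p (n + 1) z c)
              = p x z - p x z * stepProb p (n + 1) z c := fun z => by ring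
          simp_rw [hz]
          rw [Finset.sum_sub_distrib, hp1]

lemma avoidP_tendsto_zero (hp0 : ∀ x y, 0 ≤ p x y) (hp1 : ∀ x, ∑ y : X, p x y = 1)
    (hirr : IsIrreducibleMat p) {C : Set X} (hC : C.Nonempty) (x : X) :
    Tendsto (fun n => avoidP p C n x) atTop (𝓝 0) := by
  obtain ⟨c, hc⟩ := hC
  haveI : Nonempty X := ⟨c⟩
  choose nf hnf using fun z => hirr z c
  set N : ℕ := ∑ z : X, nf z with hN
  have hNz : ∀ z, nf z ≤ N :=
    fun z => Finset.single_le_sum (fun w _ => Nat.zero_le (nf w)) (Finset.mem_univ z)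
  have hN1 : 0 < N := lt_of_lt_of_le (hnf c).1 (hNz c)
  have key : ∀ z, avoidP p C N z < 1 := by
    intro z
    have h1 : avoidP p C N z ≤ avoidP p C (nf z) z :=
      avoidP_anti hp0 hp1 C z (hNz z)
    obtain ⟨m, hm⟩ : ∃ m, nf z = m + 1 :=
      ⟨nf z - 1, by have := (hnf z).1; omega⟩
    have h2 : avoidP p C (nf z) z ≤ 1 - stepProb p (nf z) z c := by
      rw [hm]; exact avoidP_le_sub hp0 hp1 hc m z
    have h3 : 0 < stepProb p (nf z) z c := (hnf z).2
    linarith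
  set δ : ℝ := Finset.univ.sup' Finset.univ_nonempty (fun z => avoidP p C N z) with hδ
  have hδ1 : δ < 1 := by
    rw [hδ, Finset.sup'_lt_iff]
    exact fun z _ => key z
  have hδ0 : 0 ≤ δ :=
    le_trans (avoidP_nonneg hp0 C N c) (Finset.le_sup' _ (Finset.mem_univ c))
  have hδle : ∀ z, avoidP p C N z ≤ δ := fun z => Finset.le_sup' _ (Finset.mem_univ z)
  have hgeo : ∀ k z, avoidP p C (k * N) z ≤ δ ^ k := by
    intro k
    induction k with
    | zero => intro z; simp [avoidP_zero]
    | succ k ih =>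
      intro z
      have h : (k + 1) * N = N + k * N := by ring
      rw [h, avoidP_add]
      calc ∑ w : X, stepProb (qMat p C) N z w * avoidP p C (k * N) w
          ≤ ∑ w : X, stepProb (qMat p C) N z w * δ ^ k :=
            Finset.sum_le_sum fun w _ => mul_le_mul_of_nonneg_left (ih w)
              (stepProb_nonneg (qMat_nonneg hp0 C) N z w)
        _ = avoidP p C N z * δ ^ k := by rw [← Finset.sum_mul]; rfl
        _ ≤ δ * δ ^ k := mul_le_mul_of_nonneg_right (hδle z) (pow_nonneg hδ0 k)
        _ = δ ^ (k + 1) := by ring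
  have hbound : ∀ n, avoidP p C n x ≤ δ ^ (n / N) := by
    intro n
    have h1 : n / N * N ≤ n := Nat.div_mul_le_self n N
    exact le_trans (avoidP_anti hp0 hp1 C x h1) (hgeo (n / N) x)
  have hdiv : Tendsto (fun n : ℕ => n / N) atTop atTop := by
    refine Filter.tendsto_atTop_atTop.mpr fun b => ⟨b * N, fun n hn => ?_⟩
    exact (Nat.le_div_iff_mul_le hN1).mpr hn
  have hpow : Tendsto (fun n : ℕ => δ ^ (n / N)) atTop (𝓝 0) :=
    (tendsto_pow_atTop_nhds_zero_of_lt_one hδ0 hδ1).comp hdiv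
  exact squeeze_zero (fun n => avoidP_nonneg hp0 C n x) hbound hpow

lemma hasSum_hitIn_one (hp0 : ∀ x y, 0 ≤ p x y) (hp1 : ∀ x, ∑ y : X, p x y = 1)
    (hirr : IsIrreducibleMat p) {C : Set X} (hC : C.Nonempty) (x : X) :
    HasSum (fun n => hitIn p C ∅ n x) 1 := by
  rw [hasSum_iff_tendsto_nat_of_nonneg (fun n => hitIn_nonneg hp0 C ∅ n x)]
  rw [← tendsto_add_atTop_iff_nat 1]
  have heq : (fun n => ∑ i ∈ Finset.range (n + 1), hitIn p C ∅ i x)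
      = fun n => 1 - avoidP p C n x := funext fun n => sum_hitIn_range hp0 hp1 C n x
  rw [heq]
  have := (avoidP_tendsto_zero hp0 hp1 hirr hC x).const_sub 1
  simpa using this

lemma sum_range_hitIn_le_one (hp0 : ∀ x y, 0 ≤ p x y) (hp1 : ∀ x, ∑ y : X, p x y = 1)
    (A B : Set X) (n : ℕ) (x : X) :
    ∑ k ∈ Finset.range n, hitIn p A B k x ≤ 1 := by
  have h1 : ∑ k ∈ Finset.range n, hitIn p A B k x
      ≤ ∑ k ∈ Finset.range n, hitIn p (A ∪ B) ∅ k x :=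
    Finset.sum_le_sum fun k _ => hitIn_le_union hp0 A B k x
  refine le_trans h1 ?_
  cases n with
  | zero => simp
  | succ n =>
    rw [sum_hitIn_range hp0 hp1 (A ∪ B) n x]
    linarith [avoidP_nonneg hp0 (A ∪ B) n x]

lemma summable_hitIn (hp0 : ∀ x y, 0 ≤ p x y) (hp1 : ∀ x, ∑ y : X, p x y = 1)
    (A B : Set X) (x : X) : Summable (fun n => hitIn p A B n x) :=
  summable_of_sum_range_le (fun n => hitIn_nonneg hp0 A B n x)
    (fun n => sum_range_hitIn_le_one hp0 hp1 A B n x)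

lemma hitIn_renewal (A B : Set X) (η : X) (hηA : η ∉ A) (hηB : η ∉ B) :
    ∀ n x, hitIn p A B n x =
      hitIn p A (B ∪ {η}) n x +
        ∑ m ∈ Finset.range n, hitIn p {η} (A ∪ B) m x * hitIn p A B (n - m) η := by
  intro n
  induction n with
  | zero => intro x; simp [hitIn]
  | succ n ih =>
    intro x
    rw [Finset.sum_range_succ']
    have hg0 : hitIn p {η} (A ∪ B) 0 x * hitIn p A B (n + 1 - 0) η = 0 := by
      rw [show hitIn p {η} (A ∪ B) 0 x = 0 from rfl]; ring
    rw [hg0, add_zero]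
    have hsub : ∀ k, n + 1 - (k + 1) = n - k := fun k => by omega
    simp only [hsub]
    simp only [hitIn]
    simp_rw [Finset.sum_mul]
    rw [Finset.sum_comm]
    simp_rw [mul_assoc, ← Finset.mul_sum]
    rw [← Finset.sum_add_distrib]
    simp_rw [← mul_add]
    refine Finset.sum_congr rfl fun y _ => ?_
    congr 1
    by_cases hyA : y ∈ A
    · have hyη : y ∉ ({η} : Set X) := by
        simp only [Set.mem_singleton_iff]; rintro rfl; exact hηA hyA
      have hyAB : y ∈ A ∪ B := Or.inl hyA
      simp [hyA, hyη, hyAB]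
    · by_cases hyB : y ∈ B
      · have hyη : y ∉ ({η} : Set X) := by
          simp only [Set.mem_singleton_iff]; rintro rfl; exact hηB hyB
        have hyAB : y ∈ A ∪ B := Or.inr hyB
        have hyBη : y ∈ B ∪ {η} := Or.inl hyB
        simp [hyA, hyB, hyη, hyAB, hyBη]
      · by_cases hyη : y = η
        · subst hyη
          have h1 : y ∈ B ∪ {y} := Or.inr rfl
          have h2 : y ∈ ({y} : Set X) := rfl
          cases n with
          | zero => simp [hyA, h1, h2, hitIn]
          | succ n =>
            simp only [if_neg hyA, if_pos h1, if_pos h2, zero_add, ite_mul, one_mul,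
              zero_mul]
            rw [Finset.sum_ite_eq' (Finset.range (n + 1)) 0
              (fun k => hitIn p A B (n + 1 - k) y)]
            simp [hyB]
        · have h1 : y ∉ B ∪ {η} := by
            simp only [Set.mem_union, Set.mem_singleton_iff]; tauto
          have h2 : y ∉ ({η} : Set X) := hyη
          have h3 : y ∉ A ∪ B := by simp only [Set.mem_union]; tauto
          simp only [if_neg hyA, if_neg hyB, if_neg h1, if_neg h2, if_neg h3]
          exact ih y

lemma hitIn_succ_ge (hp0 : ∀ x y, 0 ≤ p x y) (A B : Set X) (n : ℕ) (x z : X) :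
    p x z * (if z ∈ A then (if n = 0 then (1:ℝ) else 0)
      else if z ∈ B then 0 else hitIn p A B n z) ≤ hitIn p A B (n + 1) x := by
  rw [show hitIn p A B (n + 1) x = ∑ y : X, p x y *
      (if y ∈ A then (if n = 0 then (1:ℝ) else 0)
        else if y ∈ B then 0 else hitIn p A B n y) from rfl]
  exact Finset.single_le_sum
    (f := fun y => p x y * (if y ∈ A then (if n = 0 then (1:ℝ) else 0)
      else if y ∈ B then 0 else hitIn p A B n y))
    (fun y _ => mul_nonneg (hp0 x y) (by
      split_ifs
      all_goals first | exact hitIn_nonneg hp0 A B n y | norm_num))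
    (Finset.mem_univ z)

lemma exists_hitIn_pos (hp0 : ∀ x y, 0 ≤ p x y) (D : Set X) (η : X) (a : X) (ha : a ∈ D) :
    ∀ n x, x ∉ D → 0 < stepProb p n x a →
      (∃ m, 0 < hitIn p D {η} m η) ∨ (∃ m, 0 < hitIn p D {η} m x) := by
  intro n
  induction n with
  | zero =>
    intro x hx h
    exfalso
    rw [show stepProb p 0 x a = if x = a then (1:ℝ) else 0 from rfl] at h
    split_ifs at h with hxa
    · exact hx (hxa ▸ ha)
    · exact lt_irrefl 0 h
  | succ n ih =>
    intro x hx h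
    obtain ⟨z, hz1, hz2⟩ : ∃ z, 0 < p x z ∧ 0 < stepProb p n z a := by
      by_contra hcon
      push_neg at hcon
      have hzero : ∑ z : X, p x z * stepProb p n z a = 0 := by
        refine Finset.sum_eq_zero fun z _ => ?_
        rcases lt_or_eq_of_le (hp0 x z) with hp | hp
        · have := hcon z hp
          have h2 := stepProb_nonneg hp0 n z a
          have : stepProb p n z a = 0 := le_antisymm this h2
          rw [this, mul_zero]
        · rw [← hp, zero_mul]
      rw [show stepProb p (n + 1) x a = ∑ z : X, p x z * stepProb p n z a from rfl,
        hzero] at h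
      exact lt_irrefl 0 h
    by_cases hzD : z ∈ D
    · right
      refine ⟨1, lt_of_lt_of_le ?_ (hitIn_succ_ge hp0 D {η} 0 x z)⟩
      rw [if_pos hzD, if_pos rfl]
      simpa using hz1
    · by_cases hzη : z = η
      · subst hzη
        rcases ih z hzD hz2 with hres | hres <;> exact Or.inl hres
      · rcases ih z hzD hz2 with hres | ⟨m, hm⟩
        · exact Or.inl hres
        · right
          refine ⟨m + 1, lt_of_lt_of_le ?_ (hitIn_succ_ge hp0 D {η} m x z)⟩
          rw [if_neg hzD, if_neg (by simpa using hzη)]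
          exact mul_pos hz1 hm

lemma norm_eq_self_hitIn (hp0 : ∀ x y, 0 ≤ p x y) (A B : Set X) (x : X) :
    (fun n => ‖hitIn p A B n x‖) = fun n => hitIn p A B n x :=
  funext fun n => by rw [Real.norm_eq_abs, abs_of_nonneg (hitIn_nonneg hp0 A B n x)]

lemma renewal_half (hst : IsStochasticMat p) (hirr : IsIrreducibleMat p)
    (A B : Set X) (hAB : (A ∪ B).Nonempty) (η : X) (hηA : η ∉ A) (hηB : η ∉ B) :
    probHitBefore p A B η =
      probHitBefore p A (B ∪ {η}) η / probHitBefore p (A ∪ B) {η} η := by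
  obtain ⟨hp0, hp1⟩ := hst
  set F : ℕ → ℝ := fun n => hitIn p A B n η with hF
  set G : ℕ → ℝ := fun n => hitIn p A (B ∪ {η}) n η with hG
  set R : ℕ → ℝ := fun n => hitIn p {η} (A ∪ B) n η with hR
  set T : ℕ → ℝ := fun n => hitIn p (A ∪ B) ∅ n η with hT
  set S : ℕ → ℝ := fun n => hitIn p (A ∪ B) {η} n η with hS
  have sF : Summable F := summable_hitIn hp0 hp1 A B η
  have sG : Summable G := summable_hitIn hp0 hp1 A (B ∪ {η}) η
  have sR : Summable R := summable_hitIn hp0 hp1 {η} (A ∪ B) η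
  have sT : Summable T := summable_hitIn hp0 hp1 (A ∪ B) ∅ η
  have sS : Summable S := summable_hitIn hp0 hp1 (A ∪ B) {η} η
  have nR : Summable fun n => ‖R n‖ := by
    rw [norm_eq_self_hitIn hp0]; exact sR
  have nF : Summable fun n => ‖F n‖ := by
    rw [norm_eq_self_hitIn hp0]; exact sF
  have nT : Summable fun n => ‖T n‖ := by
    rw [norm_eq_self_hitIn hp0]; exact sT
  -- convolution identities
  have hrenF : ∀ n, F n = G n + ∑ k ∈ Finset.range (n + 1), R k * F (n - k) := by
    intro n
    rw [Finset.sum_range_succ, Nat.sub_self,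
      show F 0 = 0 from rfl, mul_zero, add_zero]
    exact hitIn_renewal A B η hηA hηB n η
  have hrenT : ∀ n, T n = S n + ∑ k ∈ Finset.range (n + 1), R k * T (n - k) := by
    intro n
    rw [Finset.sum_range_succ, Nat.sub_self,
      show T 0 = 0 from rfl, mul_zero, add_zero]
    have := hitIn_renewal (p := p) (A ∪ B) ∅ η (fun h => by
        rcases h with h | h; exact hηA h; exact hηB h) (Set.notMem_empty η) n η
    rw [Set.empty_union, Set.union_empty] at this
    exact this
  have cauchyF : HasSum (fun n => ∑ k ∈ Finset.range (n + 1), R k * F (n - k))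
      ((∑' n, R n) * ∑' n, F n) := hasSum_sum_range_mul_of_summable_norm nR nF
  have cauchyT : HasSum (fun n => ∑ k ∈ Finset.range (n + 1), R k * T (n - k))
      ((∑' n, R n) * ∑' n, T n) := hasSum_sum_range_mul_of_summable_norm nR nT
  have htsumF : ∑' n, F n = (∑' n, G n) + (∑' n, R n) * ∑' n, F n := by
    calc ∑' n, F n = ∑' n, (G n + ∑ k ∈ Finset.range (n + 1), R k * F (n - k)) :=
          tsum_congr hrenF
      _ = (∑' n, G n) + ∑' n, ∑ k ∈ Finset.range (n + 1), R k * F (n - k) :=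
          Summable.tsum_add sG cauchyF.summable
      _ = (∑' n, G n) + (∑' n, R n) * ∑' n, F n := by rw [cauchyF.tsum_eq]
  have htsumT : ∑' n, T n = (∑' n, S n) + (∑' n, R n) * ∑' n, T n := by
    calc ∑' n, T n = ∑' n, (S n + ∑ k ∈ Finset.range (n + 1), R k * T (n - k)) :=
          tsum_congr hrenT
      _ = (∑' n, S n) + ∑' n, ∑ k ∈ Finset.range (n + 1), R k * T (n - k) :=
          Summable.tsum_add sS cauchyT.summable
      _ = (∑' n, S n) + (∑' n, R n) * ∑' n, T n := by rw [cauchyT.tsum_eq]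
  have hT1 : ∑' n, T n = 1 := (hasSum_hitIn_one hp0 hp1 hirr hAB η).tsum_eq
  rw [hT1, mul_one] at htsumT
  -- positivity of the denominator
  have hSpos : 0 < ∑' n, S n := by
    obtain ⟨a, ha⟩ := hAB
    obtain ⟨n, hn1, hn2⟩ := hirr η a
    have hηD : η ∉ A ∪ B := fun h => by
      rcases h with h | h; exact hηA h; exact hηB h
    rcases exists_hitIn_pos hp0 (A ∪ B) η a ha n η hηD hn2 with ⟨m, hm⟩ | ⟨m, hm⟩ <;>
      exact Summable.tsum_pos sS (fun k => hitIn_nonneg hp0 (A ∪ B) {η} k η) m hm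
  -- conclude
  have hkey : (∑' n, F n) * (∑' n, S n) = ∑' n, G n := by
    have h1 : (∑' n, S n) = 1 - (∑' n, R n) := by linarith
    rw [h1]
    nlinarith [htsumF]
  show ∑' n, F n = (∑' n, G n) / ∑' n, S n
  rw [eq_div_iff (ne_of_gt hSpos)]
  exact hkey
end Renewal

/-- Renewal identities:
`P_η(τ_A < τ_B) = P_η(τ_A < τ_{B∪{η}})/P_η(τ_{A∪B} < τ_η)` and symmetrically. -/
theorem renewal_identities {X : Type*} [Fintype X] (p : X → X → ℝ)
    (hst : IsStochasticMat p) (hirr : IsIrreducibleMat p) (hap : IsAperiodicMat p)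
    (A B : Set X) (hA : A.Nonempty) (hB : B.Nonempty) (hAB : Disjoint A B)
    (η : X) (hη : η ∉ A ∪ B) :
    probHitBefore p A B η =
        probHitBefore p A (B ∪ {η}) η / probHitBefore p (A ∪ B) {η} η ∧
    probHitBefore p B A η =
        probHitBefore p B (A ∪ {η}) η / probHitBefore p (A ∪ B) {η} η := by
  have hηA : η ∉ A := fun h => hη (Or.inl h)
  have hηB : η ∉ B := fun h => hη (Or.inr h)
  refine ⟨renewal_half hst hirr A B hA.inl η hηA hηB, ?_⟩
  have h2 := renewal_half hst hirr B A hB.inl η hηB hηA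
  rwa [Set.union_comm B A] at h2


end
end

section
/- Let μ be a probability measure on a finite set and P a transition matrix reversible with respect to μ, and let ω = (ω_0, ω_1, …, ω_N) be a self-avoiding path with all transition probabilities P(ω_k, ω_{k+1}) > 0. Consider the one-dimensional Dirichlet problem restricted to the path: minimize E^ω(f) = Σ_{k=0}^{N-1} μ(ω_k) P(ω_k, ω_{k+1}) (f(ω_k) - f(ω_{k+1}))² over f : {ω_0,…,ω_N} → [0,1] with f(ω_0) = 1 and f(ω_N) = 0. The minimum equals M = [Σ_{k=0}^{N-1} (μ(ω_k) P(ω_k, ω_{k+1}))^{-1}]^{-1} and is uniquely attained at f(ω_k) = M Σ_{l=k}^{N-1} (μ(ω_l) P(ω_l, ω_{l+1}))^{-1}. -/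
open scoped BigOperators Classical
open Filter Topology

noncomputable section

/-! ### Generic finite-state Markov chain notions -/

variable {X : Type*} [Fintype X]

/-- One-dimensional Dirichlet problem along a self-avoiding path:
the minimum of `E^ω(f)` over `f` with `f(ω_0) = 1`, `f(ω_N) = 0` equals
`M = [Σ_k (μ(ω_k)P(ω_k,ω_{k+1}))⁻¹]⁻¹` and is uniquely attained at
`f(ω_k) = M Σ_{l=k}^{N-1} (μ(ω_l)P(ω_l,ω_{l+1}))⁻¹`. -/
theorem one_dimensional_dirichlet {X : Type*} [Fintype X] (μ : X → ℝ) (P : X → X → ℝ)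
    (hμpos : ∀ x, 0 < μ x) (hμ1 : ∑ x : X, μ x = 1)
    (hst : IsStochasticMat P) (hrev : IsReversibleWrt μ P)
    (N : ℕ) (hN : 0 < N) (ω : ℕ → X)
    (hinj : ∀ i ≤ N, ∀ j ≤ N, ω i = ω j → i = j)
    (hP : ∀ k < N, 0 < P (ω k) (ω (k + 1))) :
    IsLeast
      {e : ℝ | ∃ f : ℕ → ℝ,
        (∀ k ≤ N, f k ∈ Set.Icc (0 : ℝ) 1) ∧ f 0 = 1 ∧ f N = 0 ∧
        e = ∑ k ∈ Finset.range N,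
              μ (ω k) * P (ω k) (ω (k + 1)) * (f k - f (k + 1)) ^ 2}
      (∑ k ∈ Finset.range N, (μ (ω k) * P (ω k) (ω (k + 1)))⁻¹)⁻¹ ∧
    ∀ f : ℕ → ℝ, (∀ k ≤ N, f k ∈ Set.Icc (0 : ℝ) 1) → f 0 = 1 → f N = 0 →
      (∑ k ∈ Finset.range N, μ (ω k) * P (ω k) (ω (k + 1)) * (f k - f (k + 1)) ^ 2) =
        (∑ k ∈ Finset.range N, (μ (ω k) * P (ω k) (ω (k + 1)))⁻¹)⁻¹ →
      ∀ k ≤ N, f k =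
        (∑ j ∈ Finset.range N, (μ (ω j) * P (ω j) (ω (j + 1)))⁻¹)⁻¹ *
          ∑ l ∈ Finset.Ico k N, (μ (ω l) * P (ω l) (ω (l + 1)))⁻¹ := by
  set c : ℕ → ℝ := fun k => μ (ω k) * P (ω k) (ω (k + 1)) with hcdef
  have hcpos : ∀ k < N, 0 < c k := fun k hk => mul_pos (hμpos _) (hP k hk)
  set S : ℝ := ∑ k ∈ Finset.range N, (c k)⁻¹ with hSdef
  have hSpos : 0 < S :=
    Finset.sum_pos (fun k hk => inv_pos.2 (hcpos k (Finset.mem_range.1 hk)))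
      ⟨0, Finset.mem_range.2 hN⟩
  set M : ℝ := S⁻¹ with hMdef
  have hMpos : 0 < M := inv_pos.2 hSpos
  have hMS : M * S = 1 := inv_mul_cancel₀ hSpos.ne'
  -- key identity
  have key : ∀ f : ℕ → ℝ, f 0 = 1 → f N = 0 →
      (∑ k ∈ Finset.range N, c k * (f k - f (k + 1)) ^ 2)
        = M + ∑ k ∈ Finset.range N, c k * ((f k - f (k + 1)) - M * (c k)⁻¹) ^ 2 := by
    intro f h0 hNf
    have htel : ∑ k ∈ Finset.range N, (f k - f (k + 1)) = 1 := by
      rw [Finset.sum_range_sub' f N, h0, hNf]; ring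
    have expand : ∀ k ∈ Finset.range N,
        c k * ((f k - f (k + 1)) - M * (c k)⁻¹) ^ 2
          = c k * (f k - f (k + 1)) ^ 2 - 2 * M * (f k - f (k + 1)) + M ^ 2 * (c k)⁻¹ := by
      intro k hk
      have hck := (hcpos k (Finset.mem_range.1 hk)).ne'
      field_simp
      ring
    rw [Finset.sum_congr rfl expand]
    rw [Finset.sum_add_distrib, Finset.sum_sub_distrib, ← Finset.mul_sum, htel,
      ← Finset.mul_sum, ← hSdef]
    have : M ^ 2 * S = M := by
      rw [pow_two, mul_assoc, hMS, mul_one]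
    rw [this]; ring
  -- the candidate minimizer
  set g : ℕ → ℝ := fun k => M * ∑ l ∈ Finset.Ico k N, (c l)⁻¹ with hgdef
  have hg0 : g 0 = 1 := by
    simp only [hgdef]
    rw [← Finset.range_eq_Ico, ← hSdef, hMS]
  have hgN : g N = 0 := by simp [hgdef]
  have hgmem : ∀ k ≤ N, g k ∈ Set.Icc (0 : ℝ) 1 := by
    intro k hk
    constructor
    · apply mul_nonneg hMpos.le
      apply Finset.sum_nonneg
      intro l hl
      exact (inv_pos.2 (hcpos l (Finset.mem_Ico.1 hl).2)).le
    · have hsub : ∑ l ∈ Finset.Ico k N, (c l)⁻¹ ≤ S := by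
        rw [hSdef, Finset.range_eq_Ico]
        apply Finset.sum_le_sum_of_subset_of_nonneg
        · exact Finset.Ico_subset_Ico (Nat.zero_le _) le_rfl
        · intro l hl _
          exact (inv_pos.2 (hcpos l (Finset.mem_Ico.1 hl).2)).le
      calc g k ≤ M * S := by
            exact mul_le_mul_of_nonneg_left hsub hMpos.le
        _ = 1 := hMS
  have hgstep : ∀ k < N, g k - g (k + 1) = M * (c k)⁻¹ := by
    intro k hk
    simp only [hgdef]
    rw [Finset.sum_eq_sum_Ico_succ_bot hk]
    ring
  have hgE : (∑ k ∈ Finset.range N, c k * (g k - g (k + 1)) ^ 2) = M := by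
    have : ∀ k ∈ Finset.range N,
        c k * (g k - g (k + 1)) ^ 2 = M ^ 2 * (c k)⁻¹ := by
      intro k hk
      have hklt := Finset.mem_range.1 hk
      rw [hgstep k hklt]
      have hck := (hcpos k hklt).ne'
      field_simp
    rw [Finset.sum_congr rfl this, ← Finset.mul_sum, ← hSdef, pow_two, mul_assoc, hMS,
      mul_one]
  refine ⟨⟨⟨g, hgmem, hg0, hgN, hgE.symm⟩, ?_⟩, ?_⟩
  · rintro e ⟨f, hf, hf0, hfN, rfl⟩
    rw [key f hf0 hfN]
    have hnn : 0 ≤ ∑ k ∈ Finset.range N, c k * ((f k - f (k + 1)) - M * (c k)⁻¹) ^ 2 :=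
      Finset.sum_nonneg fun k hk =>
        mul_nonneg (hcpos k (Finset.mem_range.1 hk)).le (sq_nonneg _)
    linarith
  · intro f hf hf0 hfN hE k hk
    have h0 : ∑ k ∈ Finset.range N, c k * ((f k - f (k + 1)) - M * (c k)⁻¹) ^ 2 = 0 := by
      have := key f hf0 hfN
      rw [hE] at this
      linarith
    have hzero : ∀ k ∈ Finset.range N,
        c k * ((f k - f (k + 1)) - M * (c k)⁻¹) ^ 2 = 0 :=
      (Finset.sum_eq_zero_iff_of_nonneg fun k hk =>
        mul_nonneg (hcpos k (Finset.mem_range.1 hk)).le (sq_nonneg _)).1 h0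
    have hstep : ∀ l < N, f l - f (l + 1) = M * (c l)⁻¹ := by
      intro l hl
      have := hzero l (Finset.mem_range.2 hl)
      have hcl := (hcpos l hl).ne'
      have h2 : ((f l - f (l + 1)) - M * (c l)⁻¹) ^ 2 = 0 := by
        rcases mul_eq_zero.1 this with h | h
        · exact absurd h hcl
        · exact h
      have := pow_eq_zero_iff (n := 2) (by norm_num) |>.1 h2
      linarith
    have htel : f k - f N = ∑ l ∈ Finset.Ico k N, (f l - f (l + 1)) := by
      rw [Finset.sum_Ico_eq_sub _ hk, Finset.sum_range_sub' f N, Finset.sum_range_sub' f k]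
      ring
    have : f k = ∑ l ∈ Finset.Ico k N, M * (c l)⁻¹ := by
      rw [← Finset.sum_congr rfl fun l hl => hstep l (Finset.mem_Ico.1 hl).2, ← htel, hfN]
      ring
    rw [this, ← Finset.mul_sum]

end
end
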